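/- arXiv:2006.12206 — 2 statements merged into one kernel-verified Lean document; each statement's English description precedes it below -/
import Mathlib

section
/- Let q ∈ L¹(ℝ) be complex-valued and λ ∈ ℂ with Im λ ≥ 0 and λ ≠ 0. Then there exists a bounded continuous function m : ℝ → ℂ satisfying the Jost integral equation m(x) = 1 + ∫_x^∞ D(t−x,λ) q(t) m(t) dt for all x ∈ ℝ, this solution is unique among essentially bounded measurable solutions (any two agree almost everywhere), and it satisfies sup_{x∈ℝ} |m(x)| ≤ exp(‖q‖_{L¹}/|λ|). -/
/-
With `V g (x) = ∫_{t > x} D(t - x, λ) q(t) g(t) dt`, the kernel obeys `|D| ≤ 1/|λ|` when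
`Im λ ≥ 0`. Setting `Q(x) = ∫_x^∞ |q|`, the identity `∫_x^∞ Qⁿ |q| = Q(x)ⁿ⁺¹/(n+1)` gives
`|Vⁿ g (x)| ≤ sup |g| · (Q(x)/|λ|)ⁿ/n!`. Hence the Neumann series `∑ Vⁿ 1` converges uniformly to a
continuous solution bounded by `exp (‖q‖₁/|λ|)`, and the difference `d` of two bounded solutions
satisfies `d = Vⁿ d` for all `n`, so it vanishes.
-/

open MeasureTheory

/-- The kernel `D(y,λ) = (e^{2iλy} - 1)/(2iλ)` for `y > 0`, extended by `0`. -/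
noncomputable def D (lam : ℂ) (y : ℝ) : ℂ :=
  if 0 < y then (Complex.exp (2 * Complex.I * lam * y) - 1) / (2 * Complex.I * lam) else 0

open Set Filter Topology

lemma D_of_nonpos (lam : ℂ) {y : ℝ} (hy : y ≤ 0) : D lam y = 0 :=
  if_neg hy.not_gt

-- Also for `lam = 0`, where `D 0 = 0` and `‖0‖⁻¹ = 0`.
lemma norm_D_le {lam : ℂ} (him : 0 ≤ lam.im) (y : ℝ) : ‖D lam y‖ ≤ ‖lam‖⁻¹ := by
  rcases le_or_gt y 0 with hy | hy
  · rw [D_of_nonpos lam hy, norm_zero]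
    positivity
  have hexp : ‖Complex.exp (2 * Complex.I * lam * y)‖ ≤ 1 := by
    have : 0 ≤ 2 * lam.im * y := by positivity
    rw [Complex.norm_exp, Real.exp_le_one_iff]
    simpa [Complex.mul_re] using this
  have hden : ‖2 * Complex.I * lam‖ = 2 * ‖lam‖ := by simp
  rw [D, if_pos hy, norm_div, hden]
  calc ‖Complex.exp (2 * Complex.I * lam * y) - 1‖ / (2 * ‖lam‖) ≤ 2 / (2 * ‖lam‖) := by
        gcongr
        exact (norm_sub_le _ _).trans (by rw [norm_one]; linarith)
    _ = ‖lam‖⁻¹ := by ring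

lemma continuous_D (lam : ℂ) : Continuous (D lam) := by
  have : D lam = fun y : ℝ =>
      (Complex.exp (2 * Complex.I * lam * (max y 0 : ℝ)) - 1) / (2 * Complex.I * lam) := by
    ext y
    rcases le_or_gt y 0 with hy | hy
    · simp [D_of_nonpos lam hy, max_eq_right hy]
    · simp [D, hy, max_eq_left hy.le]
  rw [this]
  fun_prop

noncomputable def tailIntegral (f : ℝ → ℝ) (x : ℝ) : ℝ := ∫ t in Ioi x, f t

section TailIntegral

variable {f w : ℝ → ℝ}

lemma tailIntegral_nonneg (hf0 : 0 ≤ f) (x : ℝ) : 0 ≤ tailIntegral f x :=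
  setIntegral_nonneg measurableSet_Ioi fun t _ => hf0 t

lemma tailIntegral_le_integral (hf : Integrable f) (hf0 : 0 ≤ f) (x : ℝ) :
    tailIntegral f x ≤ ∫ t, f t :=
  setIntegral_le_integral hf (ae_of_all _ hf0)

lemma antitone_tailIntegral (hf : Integrable f) (hf0 : 0 ≤ f) : Antitone (tailIntegral f) :=
  fun _ _ hab => setIntegral_mono_set hf.integrableOn (ae_of_all _ hf0)
    (Ioi_subset_Ioi hab).eventuallyLE

lemma tailIntegral_sub_tailIntegral (hf : Integrable f) {x s : ℝ} (hxs : x ≤ s) :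
    tailIntegral f x - tailIntegral f s = ∫ t in Ioo x s, f t := by
  rw [tailIntegral, tailIntegral, intervalIntegral.integral_Ioi_sub_Ioi hf.integrableOn hxs,
    intervalIntegral.integral_of_le hxs, integral_Ioc_eq_integral_Ioo]

/-- Fubini on the region `x < t < s`. -/
lemma integral_tailIntegral_mul (hf : Integrable f) (hw : Integrable w) (x : ℝ) :
    ∫ t in Ioi x, tailIntegral w t * f t
      = ∫ s in Ioi x, (tailIntegral f x - tailIntegral f s) * w s := by
  set S : Set (ℝ × ℝ) := {p | x < p.1 ∧ p.1 < p.2}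
  have hS : MeasurableSet S :=
    (measurableSet_lt measurable_const measurable_fst).inter
      (measurableSet_lt measurable_fst measurable_snd)
  set G : ℝ → ℝ → ℝ := fun t s => S.indicator (fun p => f p.1 * w p.2) (t, s)
  have hG : Integrable (Function.uncurry G) (volume.prod volume) :=
    (hf.mul_prod hw).indicator hS
  have hrow : ∀ t, ∫ s, G t s = (Ioi x).indicator (fun t => tailIntegral w t * f t) t := by
    intro t
    by_cases hxt : x < t
    · have : G t = (Ioi t).indicator fun s => f t * w s := by
        ext s; by_cases hts : t < s <;> simp [G, S, hxt, hts]
      rw [this, integral_indicator measurableSet_Ioi, integral_const_mul, mul_comm,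
        indicator_of_mem (mem_Ioi.mpr hxt), tailIntegral]
    · simp [G, S, hxt]
  have hcol : ∀ s, ∫ t, G t s = (Ioi x).indicator
      (fun s => (tailIntegral f x - tailIntegral f s) * w s) s := by
    intro s
    have : (fun t => G t s) = (Ioo x s).indicator fun t => f t * w s := by
      ext t; by_cases hxt : x < t <;> by_cases hts : t < s <;> simp [G, S, hxt, hts]
    rw [this, integral_indicator measurableSet_Ioo, integral_mul_const]
    by_cases hxs : x < s
    · rw [indicator_of_mem (mem_Ioi.mpr hxs), tailIntegral_sub_tailIntegral hf hxs.le]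
    · simp [hxs]
  rw [← integral_indicator measurableSet_Ioi, ← integral_indicator measurableSet_Ioi]
  simp_rw [← hrow, ← hcol]
  exact integral_integral_swap hG

lemma integrable_tailIntegral_pow_mul (hf : Integrable f) (hf0 : 0 ≤ f) (n : ℕ) :
    Integrable fun t => tailIntegral f t ^ n * f t := by
  refine hf.bdd_mul (c := (∫ t, f t) ^ n)
    ((antitone_tailIntegral hf hf0).measurable.pow_const n).aestronglyMeasurable
    (ae_of_all _ fun t => ?_)
  rw [Real.norm_eq_abs, abs_of_nonneg (pow_nonneg (tailIntegral_nonneg hf0 t) n)]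
  exact pow_le_pow_left₀ (tailIntegral_nonneg hf0 t) (tailIntegral_le_integral hf hf0 t) n

/-- `Q = tailIntegral f` is only absolutely continuous, so this chain rule
`∫_x^∞ Qⁿ (-Q') = Q(x)ⁿ⁺¹/(n+1)` goes through Fubini rather than the fundamental theorem. -/
lemma integral_tailIntegral_pow_mul (hf : Integrable f) (hf0 : 0 ≤ f) (n : ℕ) (x : ℝ) :
    ∫ t in Ioi x, tailIntegral f t ^ n * f t = tailIntegral f x ^ (n + 1) / (n + 1) := by
  induction n generalizing x with
  | zero => simp [tailIntegral]
  | succ n ih =>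
    set Q := tailIntegral f
    set w : ℝ → ℝ := fun t => Q t ^ n * f t
    set L := ∫ t in Ioi x, Q t ^ (n + 1) * f t
    have hw : Integrable w := integrable_tailIntegral_pow_mul hf hf0 n
    have hQ : ∀ t, Q t ^ (n + 1) = (n + 1) * tailIntegral w t := fun t => by
      rw [tailIntegral, ih t]; field_simp
    have hL : L = (n + 1) * (Q x * (Q x ^ (n + 1) / (n + 1)) - L) := by
      calc L = (n + 1) * ∫ t in Ioi x, tailIntegral w t * f t := by
            simp_rw [L, hQ, mul_assoc]; exact integral_const_mul _ _
        _ = (n + 1) * ∫ s in Ioi x, (Q x * w s - Q s ^ (n + 1) * f s) := by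
            rw [integral_tailIntegral_mul hf hw]; congr 1
            refine setIntegral_congr_fun measurableSet_Ioi fun s _ => ?_
            simp only [w]; ring
        _ = (n + 1) * (Q x * (Q x ^ (n + 1) / (n + 1)) - L) := by
            rw [integral_sub (hw.const_mul _).integrableOn
              (integrable_tailIntegral_pow_mul hf hf0 (n + 1)).integrableOn,
              integral_const_mul, ih]
    push_cast
    rw [eq_div_iff (by positivity)]
    field_simp at hL
    linear_combination hL

lemma pow_mul_tailIntegral_div_factorial_le (hf : Integrable f) (hf0 : 0 ≤ f)
    {c : ℝ} (hc : 0 ≤ c) (n : ℕ) (x : ℝ) :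
    (c * tailIntegral f x) ^ n / n.factorial ≤ (c * ∫ t, f t) ^ n / n.factorial := by
  have := tailIntegral_nonneg hf0 x
  gcongr
  exact tailIntegral_le_integral hf hf0 x

end TailIntegral

noncomputable def volterraOp (K q g : ℝ → ℂ) (x : ℝ) : ℂ :=
  ∫ t in Ioi x, K (t - x) * q t * g t

section Volterra

variable {K q g : ℝ → ℂ} {k C : ℝ}

lemma norm_volterra_integrand_le (hKb : ∀ y, ‖K y‖ ≤ k) {x t : ℝ} (hgt : ‖g t‖ ≤ C) :
    ‖K (t - x) * q t * g t‖ ≤ k * C * ‖q t‖ := by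
  have hk : 0 ≤ k := (norm_nonneg _).trans (hKb 0)
  rw [norm_mul, norm_mul]
  calc ‖K (t - x)‖ * ‖q t‖ * ‖g t‖ ≤ k * ‖q t‖ * C := by gcongr; exact hKb _
    _ = k * C * ‖q t‖ := by ring

lemma integrable_volterra_integrand (hK : Measurable K) (hKb : ∀ y, ‖K y‖ ≤ k)
    (hq : Integrable q) (hg : AEStronglyMeasurable g) (hgC : ∀ᵐ t, ‖g t‖ ≤ C) (x : ℝ) :
    Integrable fun t => K (t - x) * q t * g t :=
  (hq.norm.const_mul (k * C)).mono'
    (((hK.comp (measurable_id.sub_const x)).aestronglyMeasurable.mul hq.1).mul hg)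
    (hgC.mono fun _ hgt => norm_volterra_integrand_le hKb hgt)

lemma volterraOp_eq_integral (hK0 : ∀ y ≤ 0, K y = 0) (x : ℝ) :
    volterraOp K q g x = ∫ t, K (t - x) * q t * g t :=
  setIntegral_eq_integral_of_forall_compl_eq_zero fun t ht => by
    rw [hK0 _ (sub_nonpos.mpr (not_lt.mp ht)), zero_mul, zero_mul]

lemma continuous_volterraOp (hK : Continuous K) (hKb : ∀ y, ‖K y‖ ≤ k) (hK0 : ∀ y ≤ 0, K y = 0)
    (hq : Integrable q) (hg : AEStronglyMeasurable g) (hgC : ∀ᵐ t, ‖g t‖ ≤ C) :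
    Continuous (volterraOp K q g) := by
  simp_rw [funext (volterraOp_eq_integral (q := q) (g := g) hK0)]
  exact continuous_of_dominated
    (fun x => (integrable_volterra_integrand hK.measurable hKb hq hg hgC x).1)
    (fun x => hgC.mono fun _ hgt => norm_volterra_integrand_le hKb hgt)
    (hq.norm.const_mul (k * C))
    (ae_of_all _ fun t => by fun_prop)

lemma volterraOp_sub (hK : Measurable K) (hKb : ∀ y, ‖K y‖ ≤ k) (hq : Integrable q)
    {g₁ g₂ : ℝ → ℂ} {C₁ C₂ : ℝ} (hg₁ : AEStronglyMeasurable g₁) (hg₂ : AEStronglyMeasurable g₂)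
    (hgC₁ : ∀ᵐ t, ‖g₁ t‖ ≤ C₁) (hgC₂ : ∀ᵐ t, ‖g₂ t‖ ≤ C₂) (x : ℝ) :
    volterraOp K q (g₁ - g₂) x = volterraOp K q g₁ x - volterraOp K q g₂ x := by
  rw [volterraOp, volterraOp, volterraOp, ← integral_sub
    (integrable_volterra_integrand hK hKb hq hg₁ hgC₁ x).integrableOn
    (integrable_volterra_integrand hK hKb hq hg₂ hgC₂ x).integrableOn]
  simp only [Pi.sub_apply, mul_sub]

lemma volterraOp_tsum (hK : Measurable K) (hKb : ∀ y, ‖K y‖ ≤ k) (hK0 : ∀ y ≤ 0, K y = 0)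
    (hq : Integrable q) {g : ℕ → ℝ → ℂ} {u : ℕ → ℝ} (hg : ∀ n, AEStronglyMeasurable (g n))
    (hgu : ∀ n t, ‖g n t‖ ≤ u n) (hu : Summable u) (x : ℝ) :
    volterraOp K q (fun t => ∑' n, g n t) x = ∑' n, volterraOp K q (g n) x := by
  have hint n := integrable_volterra_integrand hK hKb hq (hg n) (ae_of_all _ (hgu n)) x
  have hnorm : ∀ n, ∫ t, ‖K (t - x) * q t * g n t‖ ≤ k * (∫ t, ‖q t‖) * u n := fun n =>
    calc ∫ t, ‖K (t - x) * q t * g n t‖ ≤ ∫ t, k * u n * ‖q t‖ :=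
          integral_mono (hint n).norm (hq.norm.const_mul _)
            fun t => norm_volterra_integrand_le hKb (hgu n t)
      _ = k * (∫ t, ‖q t‖) * u n := by rw [integral_const_mul]; ring
  simp_rw [volterraOp_eq_integral hK0, ← tsum_mul_left]
  exact (integral_tsum_of_summable_integral_norm hint
    (.of_nonneg_of_le (fun n => integral_nonneg fun _ => norm_nonneg _) hnorm
      (hu.mul_left _))).symm

lemma norm_volterraOp_le (hKb : ∀ y, ‖K y‖ ≤ k) (hq : Integrable q) (n : ℕ)
    (hgn : ∀ᵐ t, ‖g t‖ ≤ C * ((k * tailIntegral (‖q ·‖) t) ^ n / n.factorial)) (x : ℝ) :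
    ‖volterraOp K q g x‖ ≤
      C * ((k * tailIntegral (‖q ·‖) x) ^ (n + 1) / (n + 1).factorial) := by
  have hQ := integrable_tailIntegral_pow_mul hq.norm (fun t => norm_nonneg (q t)) n
  calc ‖volterraOp K q g x‖
      ≤ ∫ t in Ioi x, C * k ^ (n + 1) / n.factorial * (tailIntegral (‖q ·‖) t ^ n * ‖q t‖) := by
        refine norm_integral_le_of_norm_le (hQ.const_mul _).integrableOn ?_
        filter_upwards [ae_restrict_of_ae hgn] with t hgt
        refine (norm_volterra_integrand_le hKb hgt).trans_eq ?_
        ring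
    _ = C * ((k * tailIntegral (‖q ·‖) x) ^ (n + 1) / (n + 1).factorial) := by
        rw [integral_const_mul, integral_tailIntegral_pow_mul hq.norm
          (fun t => norm_nonneg (q t)), Nat.factorial_succ]
        push_cast
        field_simp
        ring

lemma continuous_and_norm_iterate_volterraOp_one_le (hK : Continuous K) (hKb : ∀ y, ‖K y‖ ≤ k)
    (hK0 : ∀ y ≤ 0, K y = 0) (hq : Integrable q) (n : ℕ) :
    Continuous ((volterraOp K q)^[n] 1) ∧
      ∀ x, ‖(volterraOp K q)^[n] 1 x‖ ≤ (k * tailIntegral (‖q ·‖) x) ^ n / n.factorial := by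
  induction n with
  | zero => exact ⟨continuous_one, fun x => by simp⟩
  | succ n ih =>
    have hk : 0 ≤ k := (norm_nonneg _).trans (hKb 0)
    have hg := ih.1.aestronglyMeasurable (μ := volume)
    rw [Function.iterate_succ_apply']
    refine ⟨continuous_volterraOp hK hKb hK0 hq hg (ae_of_all _ fun t => (ih.2 t).trans
      (pow_mul_tailIntegral_div_factorial_le hq.norm (fun t => norm_nonneg (q t)) hk n t)),
      fun x => ?_⟩
    simpa using norm_volterraOp_le hKb hq n (C := 1)
      (ae_of_all _ fun t => by simpa using ih.2 t) x

lemma exists_continuous_eq_one_add_volterraOp (hK : Continuous K) (hKb : ∀ y, ‖K y‖ ≤ k)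
    (hK0 : ∀ y ≤ 0, K y = 0) (hq : Integrable q) :
    ∃ m : ℝ → ℂ, Continuous m ∧ (∀ x, m x = 1 + volterraOp K q m x) ∧
      ∀ x, ‖m x‖ ≤ Real.exp (k * ∫ t, ‖q t‖) := by
  have hk : 0 ≤ k := (norm_nonneg _).trans (hKb 0)
  set u : ℕ → ℝ := fun n => (k * ∫ t, ‖q t‖) ^ n / n.factorial
  have hu : HasSum u (Real.exp (k * ∫ t, ‖q t‖)) := by
    rw [Real.exp_eq_exp_ℝ]; exact NormedSpace.expSeries_div_hasSum_exp _
  set g : ℕ → ℝ → ℂ := fun n => (volterraOp K q)^[n] 1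
  have hg := continuous_and_norm_iterate_volterraOp_one_le hK hKb hK0 hq
  have hgu : ∀ n x, ‖g n x‖ ≤ u n := fun n x => ((hg n).2 x).trans
    (pow_mul_tailIntegral_div_factorial_le hq.norm (fun t => norm_nonneg (q t)) hk n x)
  refine ⟨fun x => ∑' n, g n x, continuous_tsum (fun n => (hg n).1) hu.summable hgu,
    fun x => ?_, fun x => tsum_of_norm_bounded hu (hgu · x)⟩
  show ∑' n, g n x = _
  rw [(Summable.of_norm_bounded hu.summable (hgu · x)).tsum_eq_zero_add,
    volterraOp_tsum hK.measurable hKb hK0 hq (fun n => (hg n).1.aestronglyMeasurable) hgu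
      hu.summable]
  simp only [g, Function.iterate_succ_apply']
  rfl

lemma eq_zero_of_eq_volterraOp (hKb : ∀ y, ‖K y‖ ≤ k) (hq : Integrable q)
    (hgC : ∀ᵐ t, ‖g t‖ ≤ C) (hfix : ∀ x, g x = volterraOp K q g x) (x : ℝ) : g x = 0 := by
  set Q := tailIntegral (‖q ·‖)
  have hbound : ∀ n, ∀ᵐ t, ‖g t‖ ≤ C * ((k * Q t) ^ n / n.factorial) := by
    intro n
    induction n with
    | zero => simpa using hgC
    | succ n ih => exact ae_of_all _ fun t => hfix t ▸ norm_volterraOp_le hKb hq n ih t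
  have hlim : Tendsto (fun n => C * ((k * Q x) ^ (n + 1) / (n + 1).factorial)) atTop (𝓝 0) := by
    simpa using ((tendsto_add_atTop_iff_nat 1).mpr
      (Real.summable_pow_div_factorial (k * Q x)).tendsto_atTop_zero).const_mul C
  refine norm_le_zero_iff.mp (ge_of_tendsto' hlim fun n => ?_)
  rw [hfix x]
  exact norm_volterraOp_le hKb hq n (hbound n) x

end Volterra

theorem jost_equation_solution_general (q : ℝ → ℂ) (hq : Integrable q)
    (lam : ℂ) (him : 0 ≤ lam.im) :
    (∃ m : ℝ → ℂ, Continuous m ∧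
      (∀ x, m x = 1 + ∫ t in Set.Ioi x, D lam (t - x) * q t * m t) ∧
      (∀ x, ‖m x‖ ≤ Real.exp ((∫ t, ‖q t‖) / ‖lam‖))) ∧
    (∀ m₁ m₂ : ℝ → ℂ, Measurable m₁ → Measurable m₂ →
      (∃ C₁, ∀ᵐ x ∂(volume : Measure ℝ), ‖m₁ x‖ ≤ C₁) →
      (∃ C₂, ∀ᵐ x ∂(volume : Measure ℝ), ‖m₂ x‖ ≤ C₂) →
      (∀ x, m₁ x = 1 + ∫ t in Set.Ioi x, D lam (t - x) * q t * m₁ t) →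
      (∀ x, m₂ x = 1 + ∫ t in Set.Ioi x, D lam (t - x) * q t * m₂ t) →
      m₁ =ᵐ[(volume : Measure ℝ)] m₂) := by
  have hKb := norm_D_le him
  constructor
  · obtain ⟨m, hm, heq, hbound⟩ := exists_continuous_eq_one_add_volterraOp (continuous_D lam)
      hKb (fun _ => D_of_nonpos lam) hq
    exact ⟨m, hm, heq, fun x => div_eq_inv_mul (∫ t, ‖q t‖) ‖lam‖ ▸ hbound x⟩
  rintro m₁ m₂ hm₁ hm₂ ⟨C₁, hC₁⟩ ⟨C₂, hC₂⟩ (he₁ : ∀ x, m₁ x = 1 + volterraOp (D lam) q m₁ x)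
    (he₂ : ∀ x, m₂ x = 1 + volterraOp (D lam) q m₂ x)
  have hfix : ∀ x, (m₁ - m₂) x = volterraOp (D lam) q (m₁ - m₂) x := fun x => by
    rw [volterraOp_sub (continuous_D lam).measurable hKb hq hm₁.aestronglyMeasurable
      hm₂.aestronglyMeasurable hC₁ hC₂, Pi.sub_apply, he₁ x, he₂ x]
    ring
  have hC : ∀ᵐ x, ‖(m₁ - m₂) x‖ ≤ C₁ + C₂ := by
    filter_upwards [hC₁, hC₂] with x h₁ h₂
    exact (norm_sub_le _ _).trans (add_le_add h₁ h₂)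
  exact ae_of_all _ fun x => sub_eq_zero.mp (eq_zero_of_eq_volterraOp hKb hq hC hfix x)

theorem jost_equation_solution (q : ℝ → ℂ) (hq : Integrable q)
    (lam : ℂ) (him : 0 ≤ lam.im) (hne : lam ≠ 0) :
    (∃ m : ℝ → ℂ, Continuous m ∧
      (∀ x, m x = 1 + ∫ t in Set.Ioi x, D lam (t - x) * q t * m t) ∧
      (∀ x, ‖m x‖ ≤ Real.exp ((∫ t, ‖q t‖) / ‖lam‖))) ∧
    (∀ m₁ m₂ : ℝ → ℂ, Measurable m₁ → Measurable m₂ →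
      (∃ C₁, ∀ᵐ x ∂(volume : Measure ℝ), ‖m₁ x‖ ≤ C₁) →
      (∃ C₂, ∀ᵐ x ∂(volume : Measure ℝ), ‖m₂ x‖ ≤ C₂) →
      (∀ x, m₁ x = 1 + ∫ t in Set.Ioi x, D lam (t - x) * q t * m₁ t) →
      (∀ x, m₂ x = 1 + ∫ t in Set.Ioi x, D lam (t - x) * q t * m₂ t) →
      m₁ =ᵐ[(volume : Measure ℝ)] m₂) :=
  jost_equation_solution_general q hq lam him
end

section
/- Let (λ_n)_{n∈ℕ} and (μ_n)_{n∈ℕ} be sequences of complex numbers with Im λ_n ≥ 0 and Im μ_n ≥ 0 for all n, ∑|λ_n| < ∞ and ∑|μ_n| < ∞. Then for every z ∈ ℂ with Im z > 0, |B(z,λ) − B(z,μ)| ≤ (2/Im z) · ∑_{n=1}^∞ |λ_n − μ_n|. -/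
/-!
For `Im z, Im w ≥ 0` the factor `(z - w) / (z - conj w)` has modulus at most one, and as a
function of `w` it is `2 / Im z`-Lipschitz: the identity
`B(z,l) - B(z,m) = (m - l + B(z,m) · conj (l - m)) / (z - conj l)` bounds the numerator by
`2 |l - m|`, while `|z - conj l| ≥ Im z`. For factors of modulus at most one, telescoping gives
`|∏ fᵢ - ∏ gᵢ| ≤ ∑ |fᵢ - gᵢ|`, first for finite products and then in the limit.
-/

open Complex ComplexConjugate Finset

section ProdSub

variable {R : Type*} [NormedCommRing R] [NormOneClass R]

theorem Finset.norm_prod_sub_prod_le_sum {ι : Type*} (s : Finset ι) {f g : ι → R}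
    (hf : ∀ i ∈ s, ‖f i‖ ≤ 1) (hg : ∀ i ∈ s, ‖g i‖ ≤ 1) :
    ‖∏ i ∈ s, f i - ∏ i ∈ s, g i‖ ≤ ∑ i ∈ s, ‖f i - g i‖ := by
  classical
  induction s using Finset.induction_on with
  | empty => simp
  | insert j s hj ih =>
    rw [prod_insert hj, prod_insert hj, sum_insert hj]
    have hf' : ‖f j‖ ≤ 1 := hf j (mem_insert_self j s)
    have hgs : ‖∏ i ∈ s, g i‖ ≤ 1 :=
      (norm_prod_le _ _).trans (prod_le_one (fun _ _ => norm_nonneg _)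
        fun i hi => hg i (mem_insert_of_mem hi))
    have ih' := ih (fun i hi => hf i (mem_insert_of_mem hi))
      (fun i hi => hg i (mem_insert_of_mem hi))
    calc ‖f j * ∏ i ∈ s, f i - g j * ∏ i ∈ s, g i‖
        = ‖f j * (∏ i ∈ s, f i - ∏ i ∈ s, g i) + (f j - g j) * ∏ i ∈ s, g i‖ := by
          congr 1; ring
      _ ≤ ‖f j‖ * ‖∏ i ∈ s, f i - ∏ i ∈ s, g i‖ + ‖f j - g j‖ * ‖∏ i ∈ s, g i‖ :=
        (norm_add_le _ _).trans (add_le_add (norm_mul_le _ _) (norm_mul_le _ _))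
      _ ≤ 1 * ∑ i ∈ s, ‖f i - g i‖ + ‖f j - g j‖ * 1 := by gcongr
      _ = ‖f j - g j‖ + ∑ i ∈ s, ‖f i - g i‖ := by ring

theorem norm_tprod_sub_tprod_le_tsum {ι : Type*} {f g : ι → R} (hfm : Multipliable f)
    (hgm : Multipliable g) (hf : ∀ i, ‖f i‖ ≤ 1) (hg : ∀ i, ‖g i‖ ≤ 1)
    (hfg : Summable fun i => ‖f i - g i‖) :
    ‖∏' i, f i - ∏' i, g i‖ ≤ ∑' i, ‖f i - g i‖ :=
  le_of_tendsto' (hfm.hasProd.sub hgm.hasProd).norm fun s =>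
    (s.norm_prod_sub_prod_le_sum (fun i _ => hf i) fun i _ => hg i).trans
      (hfg.sum_le_tsum s fun _ _ => norm_nonneg _)

end ProdSub

noncomputable def blaschkeFactor (z w : ℂ) : ℂ := (z - w) / (z - conj w)

section BlaschkeFactor

variable {z w : ℂ}

theorem blaschkeFactor_zero (hz : z ≠ 0) : blaschkeFactor z 0 = 1 := by
  simp [blaschkeFactor, hz]

theorem im_le_norm_sub_conj (hw : 0 ≤ w.im) : z.im ≤ ‖z - conj w‖ :=
  calc z.im ≤ (z - conj w).im := by simpa using hw
    _ ≤ ‖z - conj w‖ := im_le_norm _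

theorem norm_blaschkeFactor_le_one (hz : 0 ≤ z.im) (hw : 0 ≤ w.im) :
    ‖blaschkeFactor z w‖ ≤ 1 := by
  rw [blaschkeFactor, norm_div]
  refine div_le_one_of_le₀ ?_ (norm_nonneg _)
  rw [norm_def, norm_def]
  refine Real.sqrt_le_sqrt ?_
  simp only [normSq_apply, sub_re, sub_im, conj_re, conj_im]
  nlinarith [mul_nonneg hz hw]

theorem blaschkeFactor_sub_blaschkeFactor {l m : ℂ} (hl : z - conj l ≠ 0)
    (hm : z - conj m ≠ 0) :
    blaschkeFactor z l - blaschkeFactor z m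
      = (m - l + blaschkeFactor z m * conj (l - m)) / (z - conj l) := by
  rw [blaschkeFactor, blaschkeFactor, map_sub]
  field_simp
  ring

theorem norm_blaschkeFactor_sub_le (hz : 0 < z.im) {l m : ℂ} (hl : 0 ≤ l.im) (hm : 0 ≤ m.im) :
    ‖blaschkeFactor z l - blaschkeFactor z m‖ ≤ 2 / z.im * ‖l - m‖ := by
  have hdl : z.im ≤ ‖z - conj l‖ := im_le_norm_sub_conj hl
  have hdm : z.im ≤ ‖z - conj m‖ := im_le_norm_sub_conj hm
  rw [blaschkeFactor_sub_blaschkeFactor (norm_pos_iff.mp (hz.trans_le hdl))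
    (norm_pos_iff.mp (hz.trans_le hdm)), norm_div]
  have hnum : ‖m - l + blaschkeFactor z m * conj (l - m)‖ ≤ 2 * ‖l - m‖ :=
    calc _ ≤ ‖m - l‖ + ‖blaschkeFactor z m‖ * ‖conj (l - m)‖ := by
          rw [← norm_mul]; exact norm_add_le _ _
      _ ≤ ‖l - m‖ + 1 * ‖l - m‖ := by
          rw [norm_sub_rev, norm_conj]
          gcongr
          exact norm_blaschkeFactor_le_one hz.le hm
      _ = 2 * ‖l - m‖ := by ring
  calc _ ≤ 2 * ‖l - m‖ / z.im := div_le_div₀ (by positivity) hnum hz hdl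
    _ = 2 / z.im * ‖l - m‖ := by ring

theorem multipliable_blaschkeFactor (hz : 0 < z.im) {w : ℕ → ℂ} (hw : ∀ n, 0 ≤ (w n).im)
    (hws : Summable fun n => ‖w n‖) : Multipliable fun n => blaschkeFactor z (w n) := by
  have hz0 : z ≠ 0 := fun h => by simp [h] at hz
  have hbound (n : ℕ) : ‖blaschkeFactor z (w n) - 1‖ ≤ 2 / z.im * ‖w n‖ := by
    simpa [blaschkeFactor_zero hz0] using norm_blaschkeFactor_sub_le hz (hw n) zero_im.ge
  simpa using multipliable_one_add_of_summable
    ((hws.mul_left _).of_nonneg_of_le (fun _ => norm_nonneg _) hbound)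

end BlaschkeFactor

theorem blaschke_product_lipschitz (lam mu : ℕ → ℂ)
    (hlam : ∀ n, 0 ≤ (lam n).im) (hmu : ∀ n, 0 ≤ (mu n).im)
    (hsl : Summable fun n => ‖lam n‖)
    (hsm : Summable fun n => ‖mu n‖)
    (z : ℂ) (hz : 0 < z.im) :
    ‖(∏' n, (z - lam n) / (z - starRingEnd ℂ (lam n)))
        - ∏' n, (z - mu n) / (z - starRingEnd ℂ (mu n))‖
      ≤ 2 / z.im * ∑' n, ‖lam n - mu n‖ := by
  have hdiff : Summable fun n => ‖lam n - mu n‖ :=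
    (hsl.add hsm).of_nonneg_of_le (fun _ => norm_nonneg _) fun n => norm_sub_le _ _
  have hfactor (n : ℕ) :
      ‖blaschkeFactor z (lam n) - blaschkeFactor z (mu n)‖ ≤ 2 / z.im * ‖lam n - mu n‖ :=
    norm_blaschkeFactor_sub_le hz (hlam n) (hmu n)
  have hfactors : Summable fun n => ‖blaschkeFactor z (lam n) - blaschkeFactor z (mu n)‖ :=
    (hdiff.mul_left _).of_nonneg_of_le (fun _ => norm_nonneg _) hfactor
  calc _ ≤ ∑' n, ‖blaschkeFactor z (lam n) - blaschkeFactor z (mu n)‖ :=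
        norm_tprod_sub_tprod_le_tsum (multipliable_blaschkeFactor hz hlam hsl)
          (multipliable_blaschkeFactor hz hmu hsm)
          (fun n => norm_blaschkeFactor_le_one hz.le (hlam n))
          (fun n => norm_blaschkeFactor_le_one hz.le (hmu n)) hfactors
    _ ≤ ∑' n, 2 / z.im * ‖lam n - mu n‖ := hfactors.tsum_le_tsum hfactor (hdiff.mul_left _)
    _ = 2 / z.im * ∑' n, ‖lam n - mu n‖ := tsum_mul_left
end
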